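/- Suppose U ∈ C²(ℝ^d) with ‖D²U‖ ≤ L, L T² ≤ 1/6, and let (q_s, v_s) be the exact Hamiltonian flow started at (x, v) with U having a global minimum at 0 and U(0) = 0. Then max_{s ≤ T} ‖q_s‖ ≤ (7/6)(‖x‖ + T‖v‖), max_{s ≤ T} ‖v_s‖ ≤ (7/6)LT‖x‖ + (6/5)‖v‖, and max_{s ≤ T} ‖v_s‖² ≤ (1/2)L‖x‖² + 3‖v‖². -/

import Mathlib

/-!
Along the flow, `‖∇U q‖ ≤ L ‖q‖` because `∇U 0 = 0` and `∇U` is `L`-Lipschitz. If `m` is the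
maximum of `‖q‖` on `[0, t]`, then integrating twice gives `m ≤ ‖x‖ + t ‖v‖ + L m t² / 2`, and
`L t² ≤ 1/6` absorbs the last term: `m ≤ (12/11) (‖x‖ + T ‖v‖)`; the velocity bounds follow by
integrating once more. The flow is only given through its integral equations, so the real work is
to show that the velocity is integrable on `[0, T]`: the a priori bound keeps it bounded up to the
supremum of the times where it is integrable, and past a time where it stops being integrable the
position would be frozen, which would make the velocity continuous after all.
-/

open MeasureTheory Set

theorem IsLocalMin.eq_zero_of_hasFDerivAt_innerSL {F : Type*} [NormedAddCommGroup F]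
    [InnerProductSpace ℝ F] {f : F → ℝ} {g a : F} (h : IsLocalMin f a)
    (hf : HasFDerivAt f (innerSL ℝ g) a) : g = 0 := by
  simpa using congrArg norm (h.hasFDerivAt_eq_zero hf)

theorem norm_le_mul_norm_of_hasFDerivAt_of_map_zero {E F : Type*} [NormedAddCommGroup E]
    [NormedSpace ℝ E] [NormedAddCommGroup F] [NormedSpace ℝ F] {f : E → F}
    {f' : E → E →L[ℝ] F} {L : ℝ} (hf : ∀ p, HasFDerivAt f (f' p) p) (hf' : ∀ p, ‖f' p‖ ≤ L)
    (h0 : f 0 = 0) (p : E) : ‖f p‖ ≤ L * ‖p‖ := by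
  simpa [h0] using convex_univ.norm_image_sub_le_of_norm_hasFDerivWithin_le
    (fun y _ => (hf y).hasFDerivWithinAt) (fun y _ => hf' y) (mem_univ 0) (mem_univ p)

theorem continuousOn_Ico_of_forall_continuousOn_Icc {α β : Type*} [TopologicalSpace α]
    [LinearOrder α] [OrderTopology α] [TopologicalSpace β] {f : α → β} {a b : α}
    (h : ∀ s ∈ Ico a b, ∃ t, s < t ∧ ContinuousOn f (Icc a t)) : ContinuousOn f (Ico a b) := by
  intro s hs
  obtain ⟨t, hst, hf⟩ := h s hs
  refine (hf s ⟨hs.1, hst.le⟩).mono_of_mem_nhdsWithin ?_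
  filter_upwards [self_mem_nhdsWithin, nhdsWithin_le_nhds (Iio_mem_nhds hst)] with u hu hut
  exact ⟨hu.1, hut.le⟩

theorem intervalIntegrable_of_continuousOn_Ico_of_norm_le {E : Type*} [NormedAddCommGroup E]
    {f : ℝ → E} {a b : ℝ} (hab : a ≤ b) (hf : ContinuousOn f (Ico a b)) {K : ℝ}
    (hK : ∀ s ∈ Ico a b, ‖f s‖ ≤ K) :
    IntervalIntegrable f volume a b := by
  rw [intervalIntegrable_iff_integrableOn_Ico_of_le hab]
  exact .of_bound measure_Ico_lt_top (hf.aestronglyMeasurable measurableSet_Ico) K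
    ((ae_restrict_iff' measurableSet_Ico).2 (.of_forall hK))

theorem continuousOn_Icc_primitive {E : Type*} [NormedAddCommGroup E] [NormedSpace ℝ E]
    [CompleteSpace E] {f : ℝ → E} {a b : ℝ} (hab : a ≤ b) (hf : IntervalIntegrable f volume a b) :
    ContinuousOn (fun s => ∫ u in a..s, f u) (Icc a b) := by
  simpa only [uIcc_of_le hab] using
    intervalIntegral.continuousOn_primitive_interval' hf left_mem_uIcc

section NewtonFlow

variable {E : Type*} [NormedAddCommGroup E] [NormedSpace ℝ E] {g : E → E} {x v : E}
  {q w : ℝ → E} {L T s t : ℝ}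

/-- Integral form of `q' = w`, `w' = -g q`, `(q 0, w 0) = (x, v)`. No integrability is assumed,
so a priori the integrals may be the junk value `0`. -/
structure IsNewtonFlow (g : E → E) (x v : E) (q w : ℝ → E) : Prop where
  position : ∀ t, q t = x + ∫ s in (0:ℝ)..t, w s
  velocity : ∀ t, w t = v - ∫ s in (0:ℝ)..t, g (q s)

namespace IsNewtonFlow

theorem continuousOn_position [CompleteSpace E] (h : IsNewtonFlow g x v q w) (ht : 0 ≤ t)
    (hw : IntervalIntegrable w volume 0 t) : ContinuousOn q (Icc 0 t) :=
  (continuousOn_const.add (continuousOn_Icc_primitive ht hw)).congr fun s _ => h.position s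

theorem continuousOn_velocity [CompleteSpace E] (h : IsNewtonFlow g x v q w) (ht : 0 ≤ t)
    (hgq : IntervalIntegrable (fun s => g (q s)) volume 0 t) : ContinuousOn w (Icc 0 t) :=
  (continuousOn_const.sub (continuousOn_Icc_primitive ht hgq)).congr fun s _ => h.velocity s

theorem continuousOn_velocity_of_intervalIntegrable [CompleteSpace E]
    (h : IsNewtonFlow g x v q w) (hg : Continuous g) (ht : 0 ≤ t)
    (hw : IntervalIntegrable w volume 0 t) : ContinuousOn w (Icc 0 t) :=
  h.continuousOn_velocity ht
    ((hg.comp_continuousOn (h.continuousOn_position ht hw)).intervalIntegrable_of_Icc ht)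

theorem norm_velocity_le (h : IsNewtonFlow g x v q w) (hL : 0 ≤ L)
    (hgL : ∀ p, ‖g p‖ ≤ L * ‖p‖) (hs : 0 ≤ s) {m : ℝ} (hm : ∀ u ∈ Ioc 0 s, ‖q u‖ ≤ m) :
    ‖w s‖ ≤ ‖v‖ + L * m * s := by
  have hgq : ∀ u ∈ uIoc 0 s, ‖g (q u)‖ ≤ L * m := fun u hu =>
    (hgL _).trans (mul_le_mul_of_nonneg_left (hm u (by rwa [uIoc_of_le hs] at hu)) hL)
  calc ‖w s‖ ≤ ‖v‖ + ‖∫ u in (0:ℝ)..s, g (q u)‖ := by rw [h.velocity s]; exact norm_sub_le _ _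
    _ ≤ ‖v‖ + L * m * |s - 0| := by
      gcongr
      exact intervalIntegral.norm_integral_le_of_norm_le_const hgq
    _ = ‖v‖ + L * m * s := by rw [sub_zero, abs_of_nonneg hs]

theorem norm_position_le (h : IsNewtonFlow g x v q w) (hL : 0 ≤ L)
    (hgL : ∀ p, ‖g p‖ ≤ L * ‖p‖) (hs : 0 ≤ s) {m : ℝ} (hm : ∀ u ∈ Icc 0 s, ‖q u‖ ≤ m) :
    ‖q s‖ ≤ ‖x‖ + ‖v‖ * s + L * m * s ^ 2 / 2 := by
  have hw : ∀ u ∈ Ioc 0 s, ‖w u‖ ≤ ‖v‖ + L * m * u := fun u hu =>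
    h.norm_velocity_le hL hgL hu.1.le fun r hr => hm r ⟨hr.1.le, hr.2.trans hu.2⟩
  calc ‖q s‖ ≤ ‖x‖ + ‖∫ u in (0:ℝ)..s, w u‖ := by rw [h.position s]; exact norm_add_le _ _
    _ ≤ ‖x‖ + ∫ u in (0:ℝ)..s, (‖v‖ + L * m * u) := by
      gcongr
      exact intervalIntegral.norm_integral_le_of_norm_le hs (.of_forall hw)
        (Continuous.intervalIntegrable (by fun_prop) _ _)
    _ = ‖x‖ + ‖v‖ * s + L * m * s ^ 2 / 2 := by
      rw [intervalIntegral.integral_add intervalIntegrable_const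
        (Continuous.intervalIntegrable (by fun_prop) _ _), intervalIntegral.integral_const_mul,
        integral_id, intervalIntegral.integral_const, smul_eq_mul]
      ring

theorem norm_le_of_intervalIntegrable [CompleteSpace E] (h : IsNewtonFlow g x v q w)
    (hL : 0 ≤ L) (hgL : ∀ p, ‖g p‖ ≤ L * ‖p‖) (hLT : L * T ^ 2 ≤ 1 / 6) (ht : t ∈ Icc 0 T)
    (hw : IntervalIntegrable w volume 0 t) :
    ∀ s ∈ Icc 0 t, ‖q s‖ ≤ 12 / 11 * (‖x‖ + T * ‖v‖) ∧
      ‖w s‖ ≤ 12 / 11 * L * T * ‖x‖ + 13 / 11 * ‖v‖ := by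
  have hT : 0 ≤ T := ht.1.trans ht.2
  obtain ⟨smax, hsmax, hmax⟩ := isCompact_Icc.exists_isMaxOn (nonempty_Icc.2 ht.1)
    (h.continuousOn_position ht.1 hw).norm
  set m := ‖q smax‖
  have hsmaxT : smax ≤ T := hsmax.2.trans ht.2
  have hpos := h.norm_position_le hL hgL hsmax.1 fun u hu => hmax ⟨hu.1, hu.2.trans hsmax.2⟩
  have hsq : L * smax ^ 2 ≤ 1 / 6 :=
    (mul_le_mul_of_nonneg_left (pow_le_pow_left₀ hsmax.1 hsmaxT 2) hL).trans hLT
  have hm : m ≤ 12 / 11 * (‖x‖ + T * ‖v‖) := by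
    nlinarith [mul_le_mul_of_nonneg_left hsmaxT (norm_nonneg v), norm_nonneg (q smax)]
  intro s hs
  have hq : ∀ u ∈ Icc 0 t, ‖q u‖ ≤ 12 / 11 * (‖x‖ + T * ‖v‖) := fun u hu => (hmax hu).trans hm
  refine ⟨hq s hs, (h.norm_velocity_le hL hgL hs.1 fun u hu =>
    hq u ⟨hu.1.le, hu.2.trans hs.2⟩).trans ?_⟩
  have hsT : L * (12 / 11 * (‖x‖ + T * ‖v‖)) * s ≤ L * (12 / 11 * (‖x‖ + T * ‖v‖)) * T :=
    mul_le_mul_of_nonneg_left (hs.2.trans ht.2) (by positivity)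
  nlinarith [mul_le_mul_of_nonneg_right hLT (norm_nonneg v)]

theorem exists_intervalIntegrable_gt [CompleteSpace E] (h : IsNewtonFlow g x v q w)
    (hg : Continuous g) {c : ℝ} (hc : 0 ≤ c) (hcT : c < T)
    (hw : IntervalIntegrable w volume 0 c) :
    ∃ t ∈ Ioc c T, IntervalIntegrable w volume 0 t := by
  by_contra! hnot
  -- Past `c` the position integral is the junk value `0`, so the position is frozen at `x`.
  have hfrozen : EqOn (fun _ => g x) (fun s => g (q s)) (uIoc c T) := fun s hs => by
    rw [uIoc_of_le hcT.le] at hs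
    simp only [h.position s, intervalIntegral.integral_undef (hnot s hs), add_zero]
  have hgq : IntervalIntegrable (fun s => g (q s)) volume 0 T :=
    ((hg.comp_continuousOn (h.continuousOn_position hc hw)).intervalIntegrable_of_Icc hc).trans
      (intervalIntegrable_const.congr hfrozen)
  have hT : 0 ≤ T := hc.trans hcT.le
  exact hnot T ⟨hcT, le_rfl⟩ ((h.continuousOn_velocity hT hgq).intervalIntegrable_of_Icc hT)

theorem intervalIntegrable_velocity [CompleteSpace E] (h : IsNewtonFlow g x v q w)
    (hg : Continuous g) (hL : 0 ≤ L) (hgL : ∀ p, ‖g p‖ ≤ L * ‖p‖) (hT : 0 ≤ T)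
    (hLT : L * T ^ 2 ≤ 1 / 6) : IntervalIntegrable w volume 0 T := by
  set G := {t | t ∈ Icc 0 T ∧ IntervalIntegrable w volume 0 t}
  have hG0 : 0 ∈ G := ⟨⟨le_rfl, hT⟩, .refl⟩
  have hGbdd : BddAbove G := ⟨T, fun t ht => ht.1.2⟩
  have hc0 : 0 ≤ sSup G := le_csSup hGbdd hG0
  have hcT : sSup G ≤ T := csSup_le ⟨0, hG0⟩ fun t ht => ht.1.2
  have hG : ∀ s ∈ Ico 0 (sSup G), ∃ t ∈ G, s < t := fun s hs =>
    exists_lt_of_lt_csSup ⟨0, hG0⟩ hs.2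
  have hcG : IntervalIntegrable w volume 0 (sSup G) := by
    refine intervalIntegrable_of_continuousOn_Ico_of_norm_le hc0
      (continuousOn_Ico_of_forall_continuousOn_Icc fun s hs => ?_)
      (K := 12 / 11 * L * T * ‖x‖ + 13 / 11 * ‖v‖) fun s hs => ?_
    · obtain ⟨t, ht, hst⟩ := hG s hs
      exact ⟨t, hst, h.continuousOn_velocity_of_intervalIntegrable hg ht.1.1 ht.2⟩
    · obtain ⟨t, ht, hst⟩ := hG s hs
      exact (h.norm_le_of_intervalIntegrable hL hgL hLT ht.1 ht.2 s ⟨hs.1, hst.le⟩).2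
  rcases hcT.eq_or_lt with hcT | hcT
  · exact hcT ▸ hcG
  · obtain ⟨t, ⟨hct, htT⟩, hwt⟩ := h.exists_intervalIntegrable_gt hg hc0 hcT hcG
    exact absurd (le_csSup hGbdd ⟨⟨hc0.trans hct.le, htT⟩, hwt⟩) hct.not_ge

theorem norm_le [CompleteSpace E] (h : IsNewtonFlow g x v q w) (hg : Continuous g) (hL : 0 ≤ L)
    (hgL : ∀ p, ‖g p‖ ≤ L * ‖p‖) (hT : 0 ≤ T) (hLT : L * T ^ 2 ≤ 1 / 6) :
    ∀ s ∈ Icc 0 T, ‖q s‖ ≤ 12 / 11 * (‖x‖ + T * ‖v‖) ∧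
      ‖w s‖ ≤ 12 / 11 * L * T * ‖x‖ + 13 / 11 * ‖v‖ :=
  h.norm_le_of_intervalIntegrable hL hgL hLT ⟨hT, le_rfl⟩
    (h.intervalIntegrable_velocity hg hL hgL hT hLT)

end IsNewtonFlow

end NewtonFlow

theorem hamiltonian_flow_apriori_bounds_general {d : ℕ}
    (U : EuclideanSpace ℝ (Fin d) → ℝ)
    (gradU : EuclideanSpace ℝ (Fin d) → EuclideanSpace ℝ (Fin d))
    (hess : EuclideanSpace ℝ (Fin d) →
      (EuclideanSpace ℝ (Fin d) →L[ℝ] EuclideanSpace ℝ (Fin d)))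
    (L T : ℝ)
    (hmin : ∀ x, U 0 ≤ U x)
    (hgrad : ∀ x, HasFDerivAt U ((innerSL ℝ) (gradU x)) x)
    (hhess : ∀ x, HasFDerivAt gradU (hess x) x)
    (hL : ∀ x, ‖hess x‖ ≤ L)
    (hT : 0 < T) (hsmall : L * T^2 ≤ 1/6)
    (Q Vel : EuclideanSpace ℝ (Fin d) → EuclideanSpace ℝ (Fin d) → ℝ →
      EuclideanSpace ℝ (Fin d))
    (hQ : ∀ x v t, Q x v t = x + ∫ s in (0:ℝ)..t, Vel x v s)
    (hVel : ∀ x v t, Vel x v t = v - ∫ s in (0:ℝ)..t, gradU (Q x v s))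
    (x v : EuclideanSpace ℝ (Fin d)) :
    (∀ s ∈ Set.Icc (0:ℝ) T, ‖Q x v s‖ ≤ (7/6) * (‖x‖ + T * ‖v‖)) ∧
    (∀ s ∈ Set.Icc (0:ℝ) T, ‖Vel x v s‖ ≤ (7/6) * L * T * ‖x‖ + (6/5) * ‖v‖) ∧
    (∀ s ∈ Set.Icc (0:ℝ) T, ‖Vel x v s‖^2 ≤ (1/2) * L * ‖x‖^2 + 3 * ‖v‖^2) := by
  have hL0 : 0 ≤ L := (norm_nonneg _).trans (hL 0)
  have hgrad0 : gradU 0 = 0 :=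
    IsLocalMin.eq_zero_of_hasFDerivAt_innerSL (.of_forall hmin) (hgrad 0)
  have hgradL := norm_le_mul_norm_of_hasFDerivAt_of_map_zero hhess hL hgrad0
  have hgradc : Continuous gradU := continuous_iff_continuousAt.2 fun p => (hhess p).continuousAt
  have hbound := IsNewtonFlow.norm_le ⟨hQ x v, hVel x v⟩ hgradc hL0 hgradL hT.le hsmall
  have hLTx : 0 ≤ L * T * ‖x‖ := by positivity
  refine ⟨fun s hs => ?_, fun s hs => ?_, fun s hs => ?_⟩
  · nlinarith [(hbound s hs).1, norm_nonneg x, norm_nonneg v]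
  · linarith [(hbound s hs).2, norm_nonneg v]
  · have hL2T2 : L * T * (L * T) ≤ L / 6 := by nlinarith
    calc ‖Vel x v s‖ ^ 2 ≤ (12 / 11 * L * T * ‖x‖ + 13 / 11 * ‖v‖) ^ 2 :=
          pow_le_pow_left₀ (norm_nonneg _) (hbound s hs).2 2
      _ ≤ 2 * (12 / 11 * L * T * ‖x‖) ^ 2 + 2 * (13 / 11 * ‖v‖) ^ 2 := by
          nlinarith [sq_nonneg (12 / 11 * L * T * ‖x‖ - 13 / 11 * ‖v‖)]
      _ ≤ 1 / 2 * L * ‖x‖ ^ 2 + 3 * ‖v‖ ^ 2 := by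
          nlinarith [mul_le_mul_of_nonneg_right hL2T2 (sq_nonneg ‖x‖), sq_nonneg ‖v‖]

/-- A priori bounds for the exact Hamiltonian flow (h = 0 case of the Verlet
a priori estimates, under `L T² ≤ 1/6`). -/
theorem hamiltonian_flow_apriori_bounds {d : ℕ}
    (U : EuclideanSpace ℝ (Fin d) → ℝ)
    (gradU : EuclideanSpace ℝ (Fin d) → EuclideanSpace ℝ (Fin d))
    (hess : EuclideanSpace ℝ (Fin d) →
      (EuclideanSpace ℝ (Fin d) →L[ℝ] EuclideanSpace ℝ (Fin d)))
    (L T : ℝ)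
    (hmin : ∀ x, U 0 ≤ U x) (hU0 : U 0 = 0)
    (hgrad : ∀ x, HasFDerivAt U ((innerSL ℝ) (gradU x)) x)
    (hhess : ∀ x, HasFDerivAt gradU (hess x) x)
    (hL : ∀ x, ‖hess x‖ ≤ L)
    (hT : 0 < T) (hsmall : L * T^2 ≤ 1/6)
    (Q Vel : EuclideanSpace ℝ (Fin d) → EuclideanSpace ℝ (Fin d) → ℝ →
      EuclideanSpace ℝ (Fin d))
    (hQ : ∀ x v t, Q x v t = x + ∫ s in (0:ℝ)..t, Vel x v s)
    (hVel : ∀ x v t, Vel x v t = v - ∫ s in (0:ℝ)..t, gradU (Q x v s))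
    (x v : EuclideanSpace ℝ (Fin d)) :
    (∀ s ∈ Set.Icc (0:ℝ) T, ‖Q x v s‖ ≤ (7/6) * (‖x‖ + T * ‖v‖)) ∧
    (∀ s ∈ Set.Icc (0:ℝ) T, ‖Vel x v s‖ ≤ (7/6) * L * T * ‖x‖ + (6/5) * ‖v‖) ∧
    (∀ s ∈ Set.Icc (0:ℝ) T, ‖Vel x v s‖^2 ≤ (1/2) * L * ‖x‖^2 + 3 * ‖v‖^2) :=
  hamiltonian_flow_apriori_bounds_general U gradU hess L T hmin hgrad hhess hL hT hsmall Q Vel hQ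
    hVel x v
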